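/- Let α > -1, n ≥ 2, and H = A_n²(𝔻, μ_α) the space of n-analytic functions on the unit disk square-integrable with respect to μ_α. Then the set of Toeplitz operators {T_a : a ∈ L^∞(𝔻)}, where T_a f = P_H(a f) and P_H is the orthogonal projection of L²(𝔻, μ_α) onto H, is not dense in B(H) in the weak operator topology. -/

import Mathlib

/-!
For every bounded symbol `a`, `⟪z, T_a z⟫ = ∫ a |z|² dμ_α = ⟪z̄, T_a z̄⟫`, and both `z` and `z̄`
lie in `H` because `n ≥ 2`. The condition `⟪x, A x⟫ = ⟪y, A y⟫` is WOT-closed, and for linearly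
independent `x, y` some bounded operator violates it: the identity forces `‖x‖ = ‖y‖`, after
which the rank-one operator `⟪x, ·⟫ x` forces equality in Cauchy–Schwarz. Finally `z` and `z̄`
are independent in `L²(μ_α)`: `s z + t z̄` vanishes only on a real line unless `s = t = 0`, and
`μ_α` has positive density on the disk (it is finite because `∫₀¹ r (1 - r²)^α dr < ∞` for
`α > -1`).
-/

open MeasureTheory Finset
open scoped InnerProductSpace

/-- The open unit disk in the complex plane. -/
def unitDisk : Set ℂ := {z : ℂ | ‖z‖ < 1}

/-- The normalized weighted Lebesgue measure on the unit disk. -/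
noncomputable def muAlpha (α : ℝ) : Measure ℂ :=
  ((volume : Measure ℂ).restrict unitDisk).withDensity
    fun z => ENNReal.ofReal ((α + 1) / Real.pi * (1 - ‖z‖ ^ 2) ^ α)

/-- f is n-analytic on U. -/
def PolyAnalyticOn (n : ℕ) (f : ℂ → ℂ) (U : Set ℂ) : Prop :=
  ∃ g : ℕ → ℂ → ℂ, (∀ k < n, DifferentiableOn ℂ (g k) U) ∧
    ∀ z ∈ U, f z = ∑ k ∈ Finset.range n, g k z * (starRingEnd ℂ z) ^ k

/-- The weighted Bergman space of n-analytic functions on the unit disk,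
as a closed subspace of L²(𝔻, μ_α). -/
noncomputable def bergmanSubmodule (α : ℝ) (n : ℕ) : Submodule ℂ (Lp ℂ 2 (muAlpha α)) :=
  (Submodule.span ℂ
    {g : Lp ℂ 2 (muAlpha α) | ∃ (f : ℂ → ℂ) (_ : PolyAnalyticOn n f unitDisk)
      (hm : MemLp f 2 (muAlpha α)), g = hm.toLp f}).topologicalClosure

open Set Filter

section InnerProductSpace
variable {𝕜 E : Type*} [RCLike 𝕜] [NormedAddCommGroup E] [InnerProductSpace 𝕜 E]

lemma norm_inner_lt_norm_mul_norm_of_linearIndependent {x y : E}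
    (h : LinearIndependent 𝕜 ![x, y]) : ‖⟪x, y⟫_𝕜‖ < ‖x‖ * ‖y‖ := by
  have hx : x ≠ 0 := by simpa using h.ne_zero 0
  have hy : y ≠ 0 := by simpa using h.ne_zero 1
  refine (norm_inner_le_norm x y).lt_of_ne fun heq => ?_
  obtain ⟨r, -, rfl⟩ := (norm_inner_eq_norm_iff hx hy).1 heq
  exact (LinearIndependent.pair_iff' hx).1 h r rfl

lemma exists_inner_apply_ne_of_linearIndependent {x y : E}
    (h : LinearIndependent 𝕜 ![x, y]) : ∃ S : E →L[𝕜] E, ⟪x, S x⟫_𝕜 ≠ ⟪y, S y⟫_𝕜 := by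
  by_contra! hS
  have hnorm : ‖x‖ = ‖y‖ := by
    have := congrArg RCLike.re (hS (ContinuousLinearMap.id 𝕜 E))
    simp only [ContinuousLinearMap.id_apply, inner_self_eq_norm_sq] at this
    exact (sq_eq_sq₀ (norm_nonneg _) (norm_nonneg _)).1 this
  have hrank := congrArg norm (hS ((innerSL 𝕜 x).smulRight x))
  simp only [ContinuousLinearMap.smulRight_apply, innerSL_apply_apply, inner_smul_right,
    norm_mul, inner_self_eq_norm_sq_to_K, norm_pow, RCLike.norm_ofReal, abs_norm,
    norm_inner_symm y x] at hrank
  have := norm_inner_lt_norm_mul_norm_of_linearIndependent h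
  rw [← hnorm] at this
  nlinarith [norm_nonneg ⟪x, y⟫_𝕜]

end InnerProductSpace

namespace ContinuousLinearMapWOT
variable {𝕜 E : Type*} [RCLike 𝕜] [NormedAddCommGroup E] [InnerProductSpace 𝕜 E]

lemma isClosed_setOf_inner_apply_eq (x y : E) :
    IsClosed {A : E →WOT[𝕜] E | ⟪x, A x⟫_𝕜 = ⟪y, A y⟫_𝕜} :=
  isClosed_eq (continuous_dual_apply x (innerSL 𝕜 x)) (continuous_dual_apply y (innerSL 𝕜 y))

lemma not_dense_of_forall_inner_apply_eq {x y : E} (h : LinearIndependent 𝕜 ![x, y])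
    {s : Set (E →WOT[𝕜] E)} (hs : ∀ A ∈ s, ⟪x, A x⟫_𝕜 = ⟪y, A y⟫_𝕜) : ¬ Dense s := by
  intro hD
  obtain ⟨S, hS⟩ := exists_inner_apply_ne_of_linearIndependent h
  exact hS ((isClosed_setOf_inner_apply_eq x y).closure_subset_iff.2 hs (hD (ofCLM S)))

end ContinuousLinearMapWOT

lemma unitDisk_eq_ball : unitDisk = Metric.ball (0 : ℂ) 1 := by
  ext z
  simp [unitDisk]

lemma measurableSet_unitDisk : MeasurableSet unitDisk :=
  unitDisk_eq_ball ▸ measurableSet_ball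

lemma integrableOn_mul_one_sub_sq_rpow {α : ℝ} (hα : -1 < α) :
    IntegrableOn (fun r : ℝ => r * (1 - r ^ 2) ^ α) (Ioo 0 1) := by
  have hα' : α + 1 ≠ 0 := by linarith
  refine (intervalIntegral.integrableOn_deriv_of_nonneg
    (g := fun r : ℝ => (1 - r ^ 2) ^ (α + 1) / (-2 * (α + 1))) ?_ (fun r hr => ?_)
    (fun r hr => ?_)).mono_set Ioo_subset_Ioc_self
  · refine (((continuous_const.sub (continuous_pow 2)).rpow_const fun _ => ?_).div_const
      _).continuousOn
    exact Or.inr (by linarith)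
  · have hpos : 0 < 1 - r ^ 2 := by nlinarith [hr.1, hr.2]
    have h : HasDerivAt (fun r : ℝ => (1 - r ^ 2) ^ (α + 1))
        (-(2 * r) * (α + 1) * (1 - r ^ 2) ^ α) r := by
      simpa using ((hasDerivAt_pow 2 r).const_sub 1).rpow_const (p := α + 1) (Or.inl hpos.ne')
    exact (h.div_const _).congr_deriv (by field_simp)
  · exact mul_nonneg hr.1.le (Real.rpow_nonneg (by nlinarith [hr.1, hr.2]) α)

lemma integrableOn_unitDisk_one_sub_norm_sq_rpow {α : ℝ} (hα : -1 < α) :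
    IntegrableOn (fun z : ℂ => (1 - ‖z‖ ^ 2) ^ α) unitDisk := by
  rw [unitDisk_eq_ball, integrableOn_fun_norm_addHaar volume (f := fun r : ℝ => (1 - r ^ 2) ^ α)]
  simpa [Complex.finrank_real_complex] using integrableOn_mul_one_sub_sq_rpow hα

lemma isFiniteMeasure_muAlpha {α : ℝ} (hα : -1 < α) : IsFiniteMeasure (muAlpha α) :=
  isFiniteMeasure_withDensity_ofReal
    ((integrableOn_unitDisk_one_sub_norm_sq_rpow hα).const_mul _).hasFiniteIntegral

lemma ae_muAlpha_mem_unitDisk (α : ℝ) : ∀ᵐ z ∂muAlpha α, z ∈ unitDisk :=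
  (withDensity_absolutelyContinuous _ _).ae_le (ae_restrict_mem measurableSet_unitDisk)

lemma volume_restrict_unitDisk_absolutelyContinuous_muAlpha {α : ℝ} (hα : -1 < α) :
    volume.restrict unitDisk ≪ muAlpha α := by
  refine withDensity_absolutelyContinuous' (by fun_prop) ?_
  filter_upwards [ae_restrict_mem measurableSet_unitDisk] with z hz
  have hz' : ‖z‖ < 1 := hz
  have hw : 0 < 1 - ‖z‖ ^ 2 := by nlinarith [norm_nonneg z]
  exact (ENNReal.ofReal_pos.2 (mul_pos (div_pos (by linarith) Real.pi_pos)
    (Real.rpow_pos_of_pos hw α))).ne'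

lemma not_ae_muAlpha_mem_of_ne_top {α : ℝ} (hα : -1 < α) {L : Submodule ℝ ℂ} (hL : L ≠ ⊤) :
    ¬ ∀ᵐ z ∂muAlpha α, z ∈ L := by
  intro hmem
  have hnotMem : ∀ᵐ z ∂volume.restrict unitDisk, z ∉ L :=
    ae_restrict_of_ae (measure_eq_zero_iff_ae_notMem.1 (Measure.addHaar_submodule volume L hL))
  have hdisk : volume.restrict unitDisk ≠ 0 := by
    rw [Ne, Measure.restrict_eq_zero, unitDisk_eq_ball]
    exact (Metric.measure_ball_pos volume _ one_pos).ne'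
  refine hdisk (ae_eq_bot.1 (eventually_false_iff_eq_bot.1 ?_))
  filter_upwards [(volume_restrict_unitDisk_absolutelyContinuous_muAlpha hα).ae_le hmem,
    hnotMem] with z h1 h2
  exact h2 h1

lemma eq_zero_of_ae_muAlpha_mul_add_mul_conj_eq_zero {α : ℝ} (hα : -1 < α) {s t : ℂ}
    (h : ∀ᵐ z ∂muAlpha α, s * z + t * starRingEnd ℂ z = 0) : s = 0 ∧ t = 0 := by
  let L : Submodule ℝ ℂ := LinearMap.ker (s • LinearMap.id + t • Complex.conjAe.toLinearMap)
  have hL : ∀ z, z ∈ L ↔ s * z + t * starRingEnd ℂ z = 0 := fun z => by simp [L]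
  by_contra hst
  refine not_ae_muAlpha_mem_of_ne_top hα (L := L) (fun htop => hst ?_) (by simpa [hL] using h)
  have h1 := (hL 1).1 (htop ▸ Submodule.mem_top)
  have hI := (hL Complex.I).1 (htop ▸ Submodule.mem_top)
  simp only [map_one, Complex.conj_I] at h1 hI
  constructor
  · linear_combination (h1 - Complex.I * hI) / 2 + (s - t) / 2 * Complex.I_sq
  · linear_combination (h1 + Complex.I * hI) / 2 + (t - s) / 2 * Complex.I_sq

lemma memLp_muAlpha_of_norm_le {α : ℝ} (hα : -1 < α) {f : ℂ → ℂ} (hf : Continuous f)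
    (hfz : ∀ z, ‖f z‖ ≤ ‖z‖) (p : ENNReal) : MemLp f p (muAlpha α) := by
  have := isFiniteMeasure_muAlpha hα
  refine MemLp.of_bound hf.aestronglyMeasurable 1 ?_
  filter_upwards [ae_muAlpha_mem_unitDisk α] with z hz
  exact (hfz z).trans (le_of_lt hz)

lemma linearIndependent_toLp_id_conj {α : ℝ} (hα : -1 < α) {p : ENNReal} [Fact (1 ≤ p)]
    (hid : MemLp id p (muAlpha α)) (hconj : MemLp (starRingEnd ℂ) p (muAlpha α)) :
    LinearIndependent ℂ ![hid.toLp id, hconj.toLp (starRingEnd ℂ)] := by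
  refine LinearIndependent.pair_iff.2 fun s t hst => ?_
  refine eq_zero_of_ae_muAlpha_mul_add_mul_conj_eq_zero hα ?_
  filter_upwards [Lp.coeFn_add (s • hid.toLp id) (t • hconj.toLp (starRingEnd ℂ)),
    Lp.coeFn_smul s (hid.toLp id), Lp.coeFn_smul t (hconj.toLp (starRingEnd ℂ)),
    hid.coeFn_toLp, hconj.coeFn_toLp, Lp.coeFn_zero ℂ p (muAlpha α)] with z h1 h2 h3 h4 h5 h6
  rw [hst, h6] at h1
  simpa [h2, h3, h4, h5] using h1.symm

lemma polyAnalyticOn_mul_conj_pow {n k : ℕ} {g : ℂ → ℂ} {U : Set ℂ} (hg : DifferentiableOn ℂ g U)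
    (hk : k < n) : PolyAnalyticOn n (fun z => g z * starRingEnd ℂ z ^ k) U := by
  refine ⟨fun j z => if j = k then g z else 0, fun j _ => ?_, fun z _ => ?_⟩
  · by_cases hj : j = k
    · simpa [hj] using hg
    · simp [hj, differentiableOn_const]
  · simp [ite_mul, hk]

lemma MeasureTheory.MemLp.toLp_mem_bergmanSubmodule {α : ℝ} {n : ℕ} {f : ℂ → ℂ}
    (hf : PolyAnalyticOn n f unitDisk) (hm : MemLp f 2 (muAlpha α)) :
    hm.toLp f ∈ bergmanSubmodule α n :=
  Submodule.le_topologicalClosure _ (Submodule.subset_span ⟨f, hf, hm, rfl⟩)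

/-- The set of Toeplitz operators with bounded symbols, acting on the n-analytic
weighted Bergman space of the unit disk (n ≥ 2), is not dense in the space of
bounded operators with the weak operator topology. -/
theorem toeplitz_not_weakly_dense (α : ℝ) (hα : -1 < α) (n : ℕ) (hn : 2 ≤ n) :
    ¬ Dense
      ((ContinuousLinearMapWOT.ofCLM : ((bergmanSubmodule α n) →L[ℂ] (bergmanSubmodule α n)) →
          ContinuousLinearMapWOT (RingHom.id ℂ) (bergmanSubmodule α n) (bergmanSubmodule α n)) ''
        {S : (bergmanSubmodule α n) →L[ℂ] (bergmanSubmodule α n) |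
          ∃ a : ℂ → ℂ, Measurable a ∧ (∃ C : ℝ, ∀ z, ‖a z‖ ≤ C) ∧
            ∀ f g : bergmanSubmodule α n,
              ⟪(g : Lp ℂ 2 (muAlpha α)), ((S f : bergmanSubmodule α n) : Lp ℂ 2 (muAlpha α))⟫_ℂ
                = ∫ z, a z * ((f : Lp ℂ 2 (muAlpha α)) : ℂ → ℂ) z *
                    starRingEnd ℂ (((g : Lp ℂ 2 (muAlpha α)) : ℂ → ℂ) z) ∂(muAlpha α)}) := by
  have hid : MemLp id 2 (muAlpha α) :=
    memLp_muAlpha_of_norm_le hα continuous_id (fun _ => le_rfl) 2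
  have hconj : MemLp (starRingEnd ℂ) 2 (muAlpha α) :=
    memLp_muAlpha_of_norm_le hα Complex.continuous_conj (fun z => (Complex.norm_conj z).le) 2
  let e₁ : bergmanSubmodule α n := ⟨hid.toLp id, hid.toLp_mem_bergmanSubmodule
    (by simpa [Function.id_def] using
      polyAnalyticOn_mul_conj_pow (k := 0) differentiableOn_id (by omega))⟩
  let e₂ : bergmanSubmodule α n := ⟨hconj.toLp (starRingEnd ℂ), hconj.toLp_mem_bergmanSubmodule
    (by simpa using polyAnalyticOn_mul_conj_pow (k := 1) (differentiableOn_const 1) hn)⟩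
  refine ContinuousLinearMapWOT.not_dense_of_forall_inner_apply_eq (x := e₁) (y := e₂)
    (LinearIndependent.pair_iff.2 fun s t hst => ?_) ?_
  · exact LinearIndependent.pair_iff.1 (linearIndependent_toLp_id_conj hα hid hconj) s t
      (congrArg Subtype.val hst)
  · rintro _ ⟨S, ⟨a, -, -, hS⟩, rfl⟩
    rw [ContinuousLinearMapWOT.coe_ofCLM, Submodule.coe_inner, Submodule.coe_inner, hS, hS]
    refine integral_congr_ae ?_
    filter_upwards [hid.coeFn_toLp, hconj.coeFn_toLp] with z h₁ h₂
    simp only [e₁, e₂, h₁, h₂, id_eq, Complex.conj_conj]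
    ring
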